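/- The map Φ(z₁,z₂) = (z₁ + (3√3/2)z₂², z₂), restricted to B², belongs to S⁰(B²); i.e., there exists a normal Loewner chain (f_t)_{t≥0} on B² with f₀ = Φ. -/

import Mathlib

/-!
If `Φ(B²)` is starlike with respect to `0`, then `f_t = e^t Φ` is a normal Loewner chain, since
`e^s Φ(B²) = e^t (e^(s-t) Φ(B²)) ⊆ e^t Φ(B²)` for `s ≤ t`. For the shear
`Φ(z) = (z₁ + c z₂², z₂)` and `0 < l ≤ 1` one has `l Φ(z) = Φ(l z₁ + c l (1 - l) z₂², l z₂)`,
so starlikeness amounts to this point lying in `B²`. Writing `t = |z₂|²` and applying AM-GM to the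
cross term, that reduces to `|c|² l² t² (2 - t - l) ≤ 1 + l - l²`, which holds for `|c|² ≤ 27/4`;
for `|c|² = 27/4` it is an equality at `l = 1`, `t = 2/3`.
-/

open Complex

noncomputable section

/-- The open unit ball in `ℂ²`. -/
def B2 : Set (ℂ × ℂ) := {z | ‖z.1‖ ^ 2 + ‖z.2‖ ^ 2 < 1}

/-- A normal Loewner chain on `B²`: a family `(f_t)_{t ≥ 0}` of injective holomorphic maps
`f_t : B² → ℂ²` with increasing images, `f_t(0) = 0`, `d(f_t)₀ = e^t·id`, and such that the
family `{e^{-t} f_t}` is uniformly bounded on every compact subset of `B²`. -/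
def IsNormalLoewnerChain (f : ℝ → ℂ × ℂ → ℂ × ℂ) : Prop :=
  (∀ t, 0 ≤ t → DifferentiableOn ℂ (f t) B2) ∧
  (∀ t, 0 ≤ t → Set.InjOn (f t) B2) ∧
  (∀ s t, 0 ≤ s → s ≤ t → f s '' B2 ⊆ f t '' B2) ∧
  (∀ t, 0 ≤ t → f t 0 = 0) ∧
  (∀ t, 0 ≤ t → ∀ z : ℂ × ℂ, fderiv ℂ (f t) 0 z = Real.exp t • z) ∧
  (∀ K : Set (ℂ × ℂ), K ⊆ B2 → IsCompact K →
    ∃ M : ℝ, ∀ t, 0 ≤ t → ∀ z ∈ K, ‖Real.exp (-t) • f t z‖ ≤ M)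

/-- `f ∈ S⁰(B²)`: `f` admits parametric representation, i.e. `f` is (on `B²`) the initial
element of some normal Loewner chain. -/
def memS0 (f : ℂ × ℂ → ℂ × ℂ) : Prop :=
  ∃ F : ℝ → ℂ × ℂ → ℂ × ℂ, IsNormalLoewnerChain F ∧ ∀ z ∈ B2, F 0 z = f z

/-- The coefficient `a = (1/2)·∂²f₁/∂z₂²(0)` of `z₂²` in the first component of the Taylor
expansion of `f` at the origin. -/
def shearCoef (f : ℂ × ℂ → ℂ × ℂ) : ℂ :=
  (1 / 2 : ℂ) * iteratedDeriv 2 (fun w : ℂ => (f (0, w)).1) 0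

theorem isOpen_B2 : IsOpen B2 :=
  isOpen_lt (by fun_prop) continuous_const

theorem zero_mem_B2 : (0 : ℂ × ℂ) ∈ B2 := by
  simp [B2]

theorem memS0_of_starConvex_image {f : ℂ × ℂ → ℂ × ℂ} (hf : DifferentiableOn ℂ f B2)
    (hinj : Set.InjOn f B2) (hf0 : f 0 = 0) (hf' : fderiv ℂ f 0 = ContinuousLinearMap.id ℂ _)
    (hstar : StarConvex ℝ 0 (f '' B2)) : memS0 f := by
  have hf0' : DifferentiableAt ℂ f 0 := hf.differentiableAt (isOpen_B2.mem_nhds zero_mem_B2)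
  refine ⟨fun t z => Real.exp t • f z, ⟨fun t _ => by fun_prop, fun t _ => ?_,
    fun s t _ hst => ?_, fun t _ => by simp [hf0], fun t _ z => ?_, fun K hK hKc => ?_⟩,
    fun z _ => by simp⟩
  · exact (smul_right_injective _ (Real.exp_pos t).ne').comp_injOn hinj
  · rintro _ ⟨z, hz, rfl⟩
    obtain ⟨w, hw, hwz⟩ := hstar.smul_mem (Set.mem_image_of_mem f hz)
      (Real.exp_pos (s - t)).le (Real.exp_le_one_iff.2 (sub_nonpos.2 hst))
    refine ⟨w, hw, ?_⟩
    simp only [hwz, smul_smul, ← Real.exp_add, add_sub_cancel]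
  · show fderiv ℂ (fun z => Real.exp t • f z) 0 z = _
    rw [fderiv_fun_const_smul hf0', hf']
    rfl
  · obtain ⟨M, hM⟩ := hKc.exists_bound_of_continuousOn (hf.continuousOn.mono hK)
    refine ⟨M, fun t _ z hz => ?_⟩
    simpa [smul_smul, ← Real.exp_add] using hM z hz

def shear (c : ℂ) (z : ℂ × ℂ) : ℂ × ℂ := (z.1 + c * z.2 ^ 2, z.2)

theorem shear_neg_leftInverse (c : ℂ) : Function.LeftInverse (shear (-c)) (shear c) := by
  intro z
  simp [shear]

theorem shear_injective (c : ℂ) : Function.Injective (shear c) :=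
  (shear_neg_leftInverse c).injective

theorem differentiable_shear (c : ℂ) : Differentiable ℂ (shear c) := by
  unfold shear; fun_prop

theorem shear_zero (c : ℂ) : shear c 0 = 0 := by
  simp [shear]

theorem hasFDerivAt_shear_zero (c : ℂ) :
    HasFDerivAt (shear c) (ContinuousLinearMap.id ℂ (ℂ × ℂ)) 0 := by
  have h₂ : HasFDerivAt (Prod.snd : ℂ × ℂ → ℂ) (ContinuousLinearMap.snd ℂ ℂ ℂ) 0 :=
    hasFDerivAt_snd
  have h := (hasFDerivAt_fst.add ((h₂.pow 2).const_mul c)).prodMk h₂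
  exact h.congr_fderiv (by ext <;> simp)

theorem sq_mul_sq_mul_two_sub_sub_le {l t : ℝ} (hl0 : 0 ≤ l) (hl1 : l ≤ 1) (ht : 0 ≤ t) :
    27 / 4 * l ^ 2 * t ^ 2 * (2 - t - l) ≤ 1 + l - l ^ 2 := by
  have h₁ : 0 ≤ l ^ 2 * (3 * t + 2 * l - 4) ^ 2 * (3 * t + 2 - l) / 4 := by
    have : 0 ≤ 3 * t + 2 - l := by linarith
    positivity
  have h₂ : 0 ≤ (1 - l) ^ 2 * (1 + l * (1 - l) * (3 - l)) := by
    have : 0 ≤ 1 - l := by linarith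
    have : 0 ≤ 3 - l := by linarith
    positivity
  linear_combination h₁ + h₂

theorem shear_sq_norm_lt_one {a l x t : ℝ} (ha : a ^ 2 ≤ 27 / 4) (hl0 : 0 < l) (hl1 : l ≤ 1)
    (ht : 0 ≤ t) (hxt : x ^ 2 + t < 1) :
    (l * x + a * (l * (1 - l)) * t) ^ 2 + l ^ 2 * t < 1 := by
  have hx : x ^ 2 ≤ 1 - t := by linarith
  have h2tl : 0 ≤ 2 - t - l := by nlinarith [sq_nonneg x]
  have hcubic : a ^ 2 * t ^ 2 * (2 - t - l) * l ^ 2 ≤ 1 + l - l ^ 2 :=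
    calc a ^ 2 * t ^ 2 * (2 - t - l) * l ^ 2 ≤ 27 / 4 * l ^ 2 * t ^ 2 * (2 - t - l) := by
          nlinarith [mul_nonneg (mul_nonneg (sq_nonneg l) (sq_nonneg t)) h2tl]
      _ ≤ 1 + l - l ^ 2 := sq_mul_sq_mul_two_sub_sub_le hl0.le hl1 ht
  -- AM-GM, followed by `x² ≤ 1 - t`
  have hamgm : 2 * a * x * t + a ^ 2 * (1 - l) * t ^ 2 ≤ 1 + a ^ 2 * t ^ 2 * (2 - t - l) := by
    nlinarith [sq_nonneg (1 - a * x * t), mul_le_mul_of_nonneg_left hx (sq_nonneg (a * t))]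
  have hbracket : l ^ 2 * (2 * a * x * t + a ^ 2 * (1 - l) * t ^ 2) ≤ l ^ 2 + (1 + l - l ^ 2) := by
    nlinarith [mul_le_mul_of_nonneg_left hamgm (sq_nonneg l)]
  calc (l * x + a * (l * (1 - l)) * t) ^ 2 + l ^ 2 * t
      = l ^ 2 * (x ^ 2 + t) + (1 - l) * (l ^ 2 * (2 * a * x * t + a ^ 2 * (1 - l) * t ^ 2)) := by
        ring
    _ ≤ l ^ 2 * (x ^ 2 + t) + (1 - l) * (l ^ 2 + (1 + l - l ^ 2)) := by
        gcongr
    _ < 1 := by nlinarith [mul_lt_mul_of_pos_left hxt (pow_pos hl0 2)]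

theorem starConvex_shear_image {c : ℂ} (hc : ‖c‖ ^ 2 ≤ 27 / 4) :
    StarConvex ℝ 0 (shear c '' B2) := by
  refine starConvex_zero_iff.2 ?_
  rintro _ ⟨z, hz, rfl⟩ l hl0 hl1
  rcases hl0.eq_or_lt with rfl | hl0
  · exact ⟨0, zero_mem_B2, by simp [shear_zero]⟩
  refine ⟨(l * z.1 + c * (l * (1 - l) : ℝ) * z.2 ^ 2, l * z.2), ?_, ?_⟩
  · have hl1' : 0 ≤ 1 - l := sub_nonneg.2 hl1
    have hnorm : ‖(l : ℂ) * z.1 + c * (l * (1 - l) : ℝ) * z.2 ^ 2‖ ≤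
        l * ‖z.1‖ + ‖c‖ * (l * (1 - l)) * ‖z.2‖ ^ 2 := by
      refine norm_add_le_of_le (le_of_eq ?_) (le_of_eq ?_) <;>
        simp only [norm_mul, norm_pow, Complex.norm_real, Real.norm_eq_abs, abs_of_pos hl0,
          abs_of_nonneg hl1']
    calc ‖(l : ℂ) * z.1 + c * (l * (1 - l) : ℝ) * z.2 ^ 2‖ ^ 2 + ‖(l : ℂ) * z.2‖ ^ 2
        ≤ (l * ‖z.1‖ + ‖c‖ * (l * (1 - l)) * ‖z.2‖ ^ 2) ^ 2 + l ^ 2 * ‖z.2‖ ^ 2 := by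
          gcongr
          simp [abs_of_pos hl0, mul_pow]
      _ < 1 := shear_sq_norm_lt_one hc hl0 hl1 (sq_nonneg _) hz
  · ext
    · simp [shear, Complex.real_smul]
      ring
    · simp [shear, Complex.real_smul]

theorem memS0_shear {c : ℂ} (hc : ‖c‖ ≤ 3 * √3 / 2) : memS0 (shear c) := by
  have hc2 : ‖c‖ ^ 2 ≤ 27 / 4 := by
    calc ‖c‖ ^ 2 ≤ (3 * √3 / 2) ^ 2 := by gcongr
      _ = 27 / 4 := by rw [div_pow, mul_pow, Real.sq_sqrt (by norm_num)]; norm_num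
  exact memS0_of_starConvex_image (differentiable_shear c).differentiableOn
    (shear_injective c).injOn (shear_zero c) (hasFDerivAt_shear_zero c).fderiv
    (starConvex_shear_image hc2)

/-- The map `Φ(z₁,z₂) = (z₁ + (3√3/2) z₂², z₂)` belongs to `S⁰(B²)`. -/
theorem Phi_memS0 :
    memS0 (fun z : ℂ × ℂ => (z.1 + ((3 * Real.sqrt 3 / 2 : ℝ) : ℂ) * z.2 ^ 2, z.2)) :=
  memS0_shear (by rw [Complex.norm_real, Real.norm_of_nonneg (by positivity)])
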